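/- arXiv:1506.08382 — 8 statements merged into one kernel-verified Lean document; each statement's English description precedes it below -/
import Mathlib

section
/- For every positive integer m and every positive real number c, f(m,c)^m = f(1,c). -/
/-!
Put `y = c e^{-c}`. Then `f m c = e^{-c/m} F(1/m, y)`, where `F(a, y) = ∑ₖ Aₖ(a) yᵏ / k!` is the
exponential generating function of the Abel polynomials `Aₖ(a) = a (a + k)^{k-1}`. These are of
binomial type (Hurwitz's form of Abel's identity, proved by differentiating in the second variable),
so the Cauchy product gives `F(a, y) F(b, y) = F(a + b, y)`; the series converge absolutely for
`|y| ≤ 1/e` because `n^n e^{-n} / n! = O(n^{-1/2})` by Stirling, and `c e^{-c} ≤ 1/e`.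
Hence `F(1/m, y)^m = F(1, y)`, while `(e^{-c/m})^m = e^{-c}`.
-/

/-- `f m c = ∑_{k=0}^∞ (km+1)^{k-1} c^k e^{-c(km+1)/m} / (m^k k!)`, where the factor
`(km+1)^{k-1}` for `k = 0` is interpreted as `1` (here via `ℕ`-subtraction in the exponent,
which gives `(0·m+1)^0 = 1`). -/
noncomputable def f (m c : ℝ) : ℝ :=
  ∑' k : ℕ, ((k : ℝ) * m + 1) ^ (k - 1) * c ^ k *
    Real.exp (-c * ((k : ℝ) * m + 1) / m) / (m ^ k * (Nat.factorial k : ℝ))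

open Finset Real
open scoped Nat

noncomputable def abelPoly (a : ℝ) : ℕ → ℝ
  | 0 => 1
  | n + 1 => a * (a + (n + 1)) ^ n

lemma abelPoly_mul_add_pow (a : ℝ) {k n : ℕ} (hk : k ≤ n + 1) :
    abelPoly a k * (a + k) ^ (n + 1 - k) = a * (a + k) ^ n := by
  cases k with
  | zero => simp [abelPoly, pow_succ']
  | succ k =>
    rw [abelPoly, Nat.cast_succ, mul_assoc, ← pow_add]
    congr 2
    omega

lemma sum_neg_one_pow_mul_choose_mul_add_pow (x : ℝ) {j n : ℕ} (h : j < n) :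
    ∑ k ∈ range (n + 1), (-1) ^ (n - k) * n.choose k * (x + k) ^ j = 0 := by
  have := congrFun (fwdDiff_iter_pow_eq_zero_of_lt (R := ℝ) h) x
  rw [fwdDiff_iter_eq_sum_shift] at this
  simpa [zsmul_eq_mul] using this

lemma mul_sum_choose_eq_sum_choose_mul_sub (n : ℕ) (g : ℕ → ℝ) :
    (n + 1) * ∑ k ∈ range (n + 1), (n.choose k : ℝ) * g k
      = ∑ k ∈ range (n + 2), ((n + 1).choose k : ℝ) * ((n + 1 - k : ℕ) : ℝ) * g k := by
  symm
  rw [sum_range_succ, Nat.sub_self, Nat.cast_zero, mul_zero, zero_mul, add_zero, mul_sum]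
  refine sum_congr rfl fun k _ => ?_
  rw [← mul_assoc]
  congr 1
  exact_mod_cast (Nat.choose_mul_succ_eq n k).symm.trans (mul_comm _ _)

lemma hasDerivAt_sum_choose_mul_abelPoly_mul_sub_pow (x y : ℝ) (n : ℕ) :
    HasDerivAt
      (fun z => ∑ k ∈ range (n + 2), ((n + 1).choose k : ℝ) * abelPoly x k * (z - k) ^ (n + 1 - k))
      ((n + 1) * ∑ k ∈ range (n + 1), (n.choose k : ℝ) * abelPoly x k * (y - k) ^ (n - k)) y := by
  refine (HasDerivAt.fun_sum (u := range (n + 2)) fun k _ =>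
    (((hasDerivAt_id' y).sub_const (k : ℝ)).fun_pow (n + 1 - k)).const_mul
      (((n + 1).choose k : ℝ) * abelPoly x k)).congr_deriv ?_
  simp_rw [mul_assoc (n.choose _ : ℝ), mul_sum_choose_eq_sum_choose_mul_sub]
  refine sum_congr rfl fun k _ => ?_
  rw [show n + 1 - k - 1 = n - k by omega]
  ring

theorem add_pow_eq_sum_abelPoly (n : ℕ) (x y : ℝ) :
    (x + y) ^ n = ∑ k ∈ range (n + 1), (n.choose k : ℝ) * abelPoly x k * (y - k) ^ (n - k) := by
  induction n generalizing y with
  | zero => simp [abelPoly]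
  | succ n ih =>
    have hpow : ∀ z : ℝ, HasDerivAt (fun z => (x + z) ^ (n + 1)) ((n + 1) * (x + z) ^ n) z :=
      fun z => by simpa using ((hasDerivAt_id z).const_add x).fun_pow (n + 1)
    have hsum := fun z => ih z ▸ hasDerivAt_sum_choose_mul_abelPoly_mul_sub_pow x z n
    refine congrFun (eq_of_fderiv_eq (𝕜 := ℝ) (fun z => (hpow z).differentiableAt)
      (fun z => (hsum z).differentiableAt)
      (fun z => (hpow z).hasFDerivAt.fderiv.trans (hsum z).hasFDerivAt.fderiv.symm) (-x) ?_) y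
    -- at `y = -x` the sum is an `(n+1)`-st finite difference of a polynomial of degree `n`
    have hterm : ∀ k ∈ range (n + 2),
        ((n + 1).choose k : ℝ) * abelPoly x k * (-x - k) ^ (n + 1 - k)
          = x * ((-1) ^ (n + 1 - k) * (n + 1).choose k * (x + k) ^ n) := by
      intro k hk
      rw [show -x - k = -1 * (x + k) by ring, mul_pow, mul_assoc, mul_left_comm (abelPoly x k),
        abelPoly_mul_add_pow x (by simpa [Nat.lt_succ_iff] using hk)]
      ring
    rw [add_neg_cancel, zero_pow n.succ_ne_zero, sum_congr rfl hterm, ← mul_sum,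
      sum_neg_one_pow_mul_choose_mul_add_pow x n.lt_succ_self, mul_zero]

lemma abelPoly_eq_sub (a : ℝ) (n : ℕ) : abelPoly a n = (a + n) ^ n - n * (a + n) ^ (n - 1) := by
  cases n with
  | zero => simp [abelPoly]
  | succ n =>
    rw [abelPoly, Nat.add_sub_cancel, pow_succ, Nat.cast_succ]
    ring

theorem abelPoly_add (x y : ℝ) (n : ℕ) :
    abelPoly (x + y) n
      = ∑ k ∈ range (n + 1), (n.choose k : ℝ) * abelPoly x k * abelPoly y (n - k) := by
  cases n with
  | zero => simp [abelPoly]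
  | succ n =>
    set Y := y + (n + 1)
    have hsplit : ∀ k ∈ range (n + 2),
        ((n + 1).choose k : ℝ) * abelPoly x k * abelPoly y (n + 1 - k)
          = (n + 1).choose k * abelPoly x k * (Y - k) ^ (n + 1 - k)
            - (n + 1).choose k * ((n + 1 - k : ℕ) : ℝ) * (abelPoly x k * (Y - k) ^ (n - k)) := by
      intro k hk
      have hk : k ≤ n + 1 := Nat.lt_succ_iff.mp (mem_range.mp hk)
      rw [abelPoly_eq_sub y, show n + 1 - k - 1 = n - k by omega,
        show y + ((n + 1 - k : ℕ) : ℝ) = Y - k by simp [Y, Nat.cast_sub hk]; ring]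
      ring
    rw [sum_congr rfl hsplit, sum_sub_distrib, ← mul_sum_choose_eq_sum_choose_mul_sub,
      ← add_pow_eq_sum_abelPoly]
    simp_rw [← mul_assoc]
    rw [← add_pow_eq_sum_abelPoly, abelPoly]
    simp only [Y]
    ring

lemma abelPoly_nonneg {a : ℝ} (ha : 0 ≤ a) : ∀ n, 0 ≤ abelPoly a n
  | 0 => zero_le_one
  | _ + 1 => by rw [abelPoly]; positivity

lemma abelPoly_le {a : ℝ} (ha : 0 ≤ a) {n : ℕ} (hn : n ≠ 0) :
    abelPoly a n ≤ a * exp a * n ^ (n - 1) := by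
  obtain ⟨n, rfl⟩ := Nat.exists_eq_succ_of_ne_zero hn
  have hN : (0 : ℝ) < n + 1 := by positivity
  have hbase : a + (n + 1) ≤ (n + 1) * exp (a / (n + 1)) :=
    calc a + (n + 1) = (n + 1) * (a / (n + 1) + 1) := by field_simp
      _ ≤ (n + 1) * exp (a / (n + 1)) := by gcongr; exact add_one_le_exp _
  have hexp : exp (a / (n + 1)) ^ n ≤ exp a := by
    rw [← exp_nat_mul, exp_le_exp, mul_div_assoc', div_le_iff₀ hN]
    linarith
  calc abelPoly a (n + 1) = a * (a + (n + 1)) ^ n := rfl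
    _ ≤ a * ((n + 1) * exp (a / (n + 1))) ^ n := by gcongr
    _ = a * exp (a / (n + 1)) ^ n * (n + 1) ^ n := by rw [mul_pow]; ring
    _ ≤ a * exp a * ((n + 1 : ℕ) : ℝ) ^ (n + 1 - 1) := by push_cast; gcongr

lemma pow_pred_mul_exp_neg_div_factorial_le {n : ℕ} (hn : n ≠ 0) :
    (n : ℝ) ^ (n - 1) * exp (-n) / n ! ≤ (n : ℝ) ^ (-(3 / 2 : ℝ)) := by
  have hpos : (0 : ℝ) < n := by positivity
  have hlhs : (n : ℝ) ^ (n - 1) * exp (-n) / n ! = (n / exp 1) ^ n / (n * n !) := by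
    rw [div_pow, exp_one_pow, exp_neg, ← pow_sub_one_mul hn]
    field_simp
  have hrhs : (n : ℝ) ^ (-(3 / 2 : ℝ)) = 1 / (n * √n) := by
    rw [rpow_neg hpos.le, sqrt_eq_rpow, ← rpow_one_add' hpos.le (by norm_num)]
    norm_num
  rw [hlhs, hrhs, div_le_div_iff₀ (by positivity) (by positivity)]
  calc (n / exp 1) ^ n * (n * √n) = n * (√n * (n / exp 1) ^ n) := by ring
    _ ≤ n * (√(2 * π * n) * (n / exp 1) ^ n) := by
      gcongr
      nlinarith [pi_gt_three]
    _ ≤ 1 * (n * n !) := by rw [one_mul]; gcongr; exact Stirling.le_factorial_stirling n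

lemma summable_norm_abelPoly_mul_pow_div_factorial {a y : ℝ} (ha : 0 ≤ a) (hy : |y| ≤ exp (-1)) :
    Summable fun n => ‖abelPoly a n * y ^ n / (n ! : ℝ)‖ := by
  refine .of_norm_bounded_eventually_nat
    ((summable_nat_rpow.mpr (by norm_num : -(3 / 2 : ℝ) < -1)).mul_left (a * exp a)) ?_
  filter_upwards [Filter.eventually_ne_atTop 0] with n hn
  have hyn : |y| ^ n ≤ exp (-n) :=
    (pow_le_pow_left₀ (abs_nonneg y) hy n).trans_eq (by rw [← exp_nat_mul]; ring_nf)
  rw [norm_norm, norm_div, norm_mul, norm_pow, Real.norm_of_nonneg (abelPoly_nonneg ha n),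
    Real.norm_eq_abs, RCLike.norm_natCast]
  calc abelPoly a n * |y| ^ n / n ! ≤ a * exp a * n ^ (n - 1) * exp (-n) / n ! := by
        gcongr
        exact abelPoly_le ha hn
    _ = a * exp a * ((n : ℝ) ^ (n - 1) * exp (-n) / n !) := by ring
    _ ≤ a * exp a * (n : ℝ) ^ (-(3 / 2 : ℝ)) := by
        gcongr
        exact pow_pred_mul_exp_neg_div_factorial_le hn

noncomputable def abelSeries (a y : ℝ) : ℝ := ∑' n, abelPoly a n * y ^ n / n !

lemma abelSeries_zero_left (y : ℝ) : abelSeries 0 y = 1 := by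
  rw [abelSeries, tsum_eq_single 0]
  · simp [abelPoly]
  · rintro (_ | n) hn
    exacts [(hn rfl).elim, by simp [abelPoly]]

lemma abelSeries_add {a b y : ℝ} (ha : 0 ≤ a) (hb : 0 ≤ b) (hy : |y| ≤ exp (-1)) :
    abelSeries (a + b) y = abelSeries a y * abelSeries b y := by
  rw [abelSeries, abelSeries, abelSeries, tsum_mul_tsum_eq_tsum_sum_range_of_summable_norm
    (summable_norm_abelPoly_mul_pow_div_factorial ha hy)
    (summable_norm_abelPoly_mul_pow_div_factorial hb hy)]
  refine tsum_congr fun n => ?_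
  rw [abelPoly_add, sum_mul, sum_div]
  refine sum_congr rfl fun k hk => ?_
  have hk : k ≤ n := Nat.lt_succ_iff.mp (mem_range.mp hk)
  rw [Nat.cast_choose ℝ hk, ← Nat.add_sub_cancel' hk, pow_add, Nat.add_sub_cancel_left]
  field_simp

lemma abelSeries_pow {a y : ℝ} (ha : 0 ≤ a) (hy : |y| ≤ exp (-1)) (n : ℕ) :
    abelSeries a y ^ n = abelSeries (n * a) y := by
  induction n with
  | zero => simp [abelSeries_zero_left]
  | succ n ih =>
    rw [pow_succ, ih, ← abelSeries_add (by positivity) ha hy]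
    push_cast
    rw [add_one_mul]

lemma f_eq_exp_mul_abelSeries {m : ℝ} (hm : m ≠ 0) (c : ℝ) :
    f m c = exp (-c / m) * abelSeries m⁻¹ (c * exp (-c)) := by
  rw [f, abelSeries, ← tsum_mul_left]
  refine tsum_congr fun k => ?_
  cases k with
  | zero => simp [abelPoly]
  | succ k =>
    have hexp : exp (-c * ((k + 1 : ℕ) * m + 1) / m) = exp (-c) ^ (k + 1) * exp (-c / m) := by
      rw [← exp_nat_mul, ← exp_add]
      congr 1
      field_simp
      push_cast
      ring
    rw [hexp, abelPoly, Nat.add_sub_cancel, mul_pow,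
      show m⁻¹ + (k + 1) = m⁻¹ * ((k + 1 : ℕ) * m + 1) by field_simp; push_cast; ring, mul_pow,
      inv_pow]
    field_simp
    ring

lemma abs_mul_exp_neg_le {c : ℝ} (hc : 0 ≤ c) : |c * exp (-c)| ≤ exp (-1) := by
  rw [abs_of_nonneg (by positivity)]
  calc c * exp (-c) ≤ exp (c - 1) * exp (-c) := by gcongr; linarith [add_one_le_exp (c - 1)]
    _ = exp (-1) := by rw [← exp_add]; ring_nf

theorem f_pow_nat (m : ℕ) (hm : 0 < m) (c : ℝ) (hc : 0 < c) :
    f (m : ℝ) c ^ m = f 1 c := by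
  have hm' : (m : ℝ) ≠ 0 := by positivity
  rw [f_eq_exp_mul_abelSeries hm', f_eq_exp_mul_abelSeries one_ne_zero, mul_pow, ← exp_nat_mul,
    abelSeries_pow (by positivity) (abs_mul_exp_neg_le hc.le), mul_inv_cancel₀ hm', inv_one,
    mul_div_cancel₀ _ hm', div_one]
end

section
/- For all positive real numbers m and c, the series ∑_{k=0}^∞ (km+1)^{k-1} c^k e^{-c(km+1)/m} / (m^k k!) is summable (the sequence of terms k ↦ (km+1)^{k-1} c^k e^{-c(km+1)/m} / (m^k k!) is summable over ℕ). -/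
open Real

/-- Stirling-type lower bound: `√n * (n/e)^n ≤ n!`. -/
lemma fact_lower_bound (n : ℕ) :
    Real.sqrt n * ((n : ℝ) ^ n / Real.exp 1 ^ n) ≤ (Nat.factorial n : ℝ) := by
  rcases Nat.eq_zero_or_pos n with rfl | hn
  · simp
  · obtain ⟨k, rfl⟩ := Nat.exists_eq_add_of_le hn
    set n := 1 + k with hnk
    have hN : (0:ℝ) < n := by positivity
    have hpi : Real.sqrt π ≤ Stirling.stirlingSeq n := by
      have h1 : Filter.Tendsto (fun m => Stirling.stirlingSeq (m + 1)) Filter.atTop (nhds (Real.sqrt π)) :=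
        (Filter.tendsto_add_atTop_iff_nat 1).mpr Stirling.tendsto_stirlingSeq_sqrt_pi
      have := Stirling.stirlingSeq'_antitone.le_of_tendsto h1 k
      simpa [Function.comp, Nat.succ_eq_add_one, hnk, Nat.add_comm] using this
    have h1pi : (1:ℝ) ≤ Real.sqrt π := by
      rw [show (1:ℝ) = Real.sqrt 1 by simp]
      exact Real.sqrt_le_sqrt (by linarith [Real.pi_gt_three])
    have hdef : Stirling.stirlingSeq n =
        (Nat.factorial n : ℝ) / (Real.sqrt (2 * n) * ((n : ℝ) / Real.exp 1) ^ n) := rfl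
    have hden : 0 < Real.sqrt (2 * n) * ((n : ℝ) / Real.exp 1) ^ n := by positivity
    have h2 : Real.sqrt (2 * n) * ((n : ℝ) / Real.exp 1) ^ n ≤ (Nat.factorial n : ℝ) := by
      have := (one_le_div hden).mp (le_trans h1pi (hdef ▸ hpi))
      linarith
    calc Real.sqrt n * ((n : ℝ) ^ n / Real.exp 1 ^ n)
        = Real.sqrt n * ((n : ℝ) / Real.exp 1) ^ n := by rw [div_pow]
      _ ≤ Real.sqrt (2 * n) * ((n : ℝ) / Real.exp 1) ^ n := by
          have : Real.sqrt n ≤ Real.sqrt (2 * n) := Real.sqrt_le_sqrt (by linarith)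
          exact mul_le_mul_of_nonneg_right this (by positivity)
      _ ≤ (Nat.factorial n : ℝ) := h2

theorem f_summable (m c : ℝ) (hm : 0 < m) (hc : 0 < c) :
    Summable (fun k : ℕ => ((k : ℝ) * m + 1) ^ (k - 1) * c ^ k *
      Real.exp (-c * ((k : ℝ) * m + 1) / m) / (m ^ k * (Nat.factorial k : ℝ))) := by
  rw [← summable_nat_add_iff 1]
  -- summable majorant: C * (n * √n)⁻¹ with n = k+1
  have hbase : Summable (fun k : ℕ => (((k : ℝ) + 1) * Real.sqrt ((k : ℝ) + 1))⁻¹) := by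
    have h32 : Summable (fun k : ℕ => ((k : ℝ) ^ ((3:ℝ)/2))⁻¹) :=
      Real.summable_nat_rpow_inv.mpr (by norm_num)
    have h32' := (summable_nat_add_iff 1).mpr h32
    refine h32'.congr fun k => ?_
    have hk : (0:ℝ) < (k : ℝ) + 1 := by positivity
    push_cast
    rw [show ((3:ℝ)/2) = 1 + 1/2 by norm_num, Real.rpow_add hk, Real.rpow_one,
      ← Real.sqrt_eq_rpow]
  have hsum := hbase.mul_left (Real.exp (1/m) / m)
  refine Summable.of_nonneg_of_le (fun k => by positivity) (fun k => ?_) hsum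
  -- pointwise bound
  set n : ℕ := k + 1 with hn
  have hNc : ((n : ℕ) : ℝ) = (k : ℝ) + 1 := by push_cast [hn]; ring
  set N : ℝ := (k : ℝ) + 1 with hNdef
  have hNpos : (0:ℝ) < N := by positivity
  have hN1 : (1:ℝ) ≤ N := by rw [hNdef]; linarith [Nat.cast_nonneg (α := ℝ) k]
  have hfac : Real.sqrt N * (N ^ n / Real.exp 1 ^ n) ≤ (Nat.factorial n : ℝ) := by
    have := fact_lower_bound n
    rwa [hNc] at this
  have hfacpos : (0:ℝ) < (Nat.factorial n : ℝ) := by positivity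
  -- split the exponential
  have hexp : Real.exp (-c * (N * m + 1) / m) = Real.exp (-c) ^ n * Real.exp (-c/m) := by
    rw [← Real.exp_nat_mul, ← Real.exp_add, hNc]
    congr 1
    field_simp
    ring
  -- (c e^{-c} e)^n ≤ 1
  have hce : c * Real.exp (-c) * Real.exp 1 ≤ 1 := by
    have h := Real.add_one_le_exp (c - 1)
    have hpos : (0:ℝ) < Real.exp (1 - c) := Real.exp_pos _
    have : c * Real.exp (1 - c) ≤ Real.exp (c - 1) * Real.exp (1 - c) :=
      mul_le_mul_of_nonneg_right (by linarith) hpos.le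
    rw [← Real.exp_add] at this
    simp only [show c - 1 + (1 - c) = 0 by ring, Real.exp_zero] at this
    calc c * Real.exp (-c) * Real.exp 1 = c * Real.exp (1 - c) := by
          rw [mul_assoc, ← Real.exp_add]; ring_nf
      _ ≤ 1 := this
  have hcen : (c * Real.exp (-c) * Real.exp 1) ^ n ≤ 1 :=
    pow_le_one₀ (by positivity) hce
  -- (Nm+1)^n ≤ (Nm)^n * exp(1/m)
  have hNm : (0:ℝ) < N * m := by positivity
  have hpow : (N * m + 1) ^ n ≤ (N * m) ^ n * Real.exp (1/m) := by
    have h1 : N * m + 1 ≤ N * m * Real.exp (1/(N*m)) := by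
      have := Real.add_one_le_exp (1/(N*m))
      calc N * m + 1 = N * m * (1/(N*m) + 1) := by field_simp; ring
        _ ≤ N * m * Real.exp (1/(N*m)) := mul_le_mul_of_nonneg_left this hNm.le
    calc (N * m + 1) ^ n ≤ (N * m * Real.exp (1/(N*m))) ^ n :=
          pow_le_pow_left₀ (by positivity) h1 n
      _ = (N * m) ^ n * Real.exp (1/(N*m)) ^ n := mul_pow _ _ _
      _ = (N * m) ^ n * Real.exp ((n : ℝ) * (1/(N*m))) := by rw [Real.exp_nat_mul]
      _ = (N * m) ^ n * Real.exp (1/m) := by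
          congr 2
          rw [hNc]
          field_simp
  -- now assemble
  have hnm1 : n - 1 = k := by simp [hn]
  have hexp1 : (0:ℝ) < Real.exp 1 := Real.exp_pos 1
  have hcm : Real.exp (-c/m) ≤ 1 := Real.exp_le_one_iff.mpr (by apply div_nonpos_of_nonpos_of_nonneg <;> linarith)
  have key : (N * m + 1) ^ k * c ^ n * Real.exp (-c * (N * m + 1) / m) / (m ^ n * (Nat.factorial n : ℝ))
      ≤ Real.exp (1/m) / m * (N * Real.sqrt N)⁻¹ := by
    rw [hexp]
    have hsq : (0:ℝ) < Real.sqrt N := Real.sqrt_pos.mpr hNpos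
    calc (N * m + 1) ^ k * c ^ n * (Real.exp (-c) ^ n * Real.exp (-c/m)) / (m ^ n * (Nat.factorial n : ℝ))
        ≤ (N * m + 1) ^ k * c ^ n * (Real.exp (-c) ^ n * 1) /
            (m ^ n * (Real.sqrt N * (N ^ n / Real.exp 1 ^ n))) := by
          gcongr
      _ = (N * m + 1) ^ k * (c * Real.exp (-c) * Real.exp 1) ^ n /
            (m ^ n * Real.sqrt N * N ^ n) := by
          rw [mul_pow, mul_pow, mul_one]
          field_simp
      _ ≤ (N * m + 1) ^ k * 1 / (m ^ n * Real.sqrt N * N ^ n) := by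
          gcongr
      _ = (N * m + 1) ^ k / (m ^ n * Real.sqrt N * N ^ n) := by rw [mul_one]
      _ ≤ ((N * m) ^ n * Real.exp (1/m) / (N * m)) / (m ^ n * Real.sqrt N * N ^ n) := by
          gcongr
          have h3 : (N * m + 1) ^ k * (N * m + 1) = (N * m + 1) ^ n := by
            rw [hn, pow_succ]
          rw [le_div_iff₀ hNm]
          calc (N * m + 1) ^ k * (N * m) ≤ (N * m + 1) ^ k * (N * m + 1) := by
                apply mul_le_mul_of_nonneg_left (by linarith) (by positivity)
            _ = (N * m + 1) ^ n := h3
            _ ≤ (N * m) ^ n * Real.exp (1/m) := hpow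
      _ = Real.exp (1/m) / m * (N * Real.sqrt N)⁻¹ := by
          rw [mul_pow]
          field_simp
  -- transfer `key` to the goal (which mentions k+1 coercions)
  have hgoal : ((((k:ℕ)+1 : ℕ) : ℝ) * m + 1) = N * m + 1 := by push_cast; ring
  simpa [hn, hNc, hnm1, hgoal] using key
end

section
/- The function (m,c) ↦ f(m,c) is continuous on the set of pairs of positive real numbers {(m,c) : m > 0, c > 0}. -/
open Real Set Filter Topology Nat

lemma sqrt_mul_pow_mul_exp_neg_le_factorial (n : ℕ) :
    √n * (n : ℝ) ^ n * exp (-n) ≤ n ! := by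
  calc √n * (n : ℝ) ^ n * exp (-n) = √n * (n / exp 1) ^ n := by
        rw [div_pow, ← exp_nat_mul, mul_one, exp_neg]; ring
    _ ≤ √(2 * π * n) * (n / exp 1) ^ n := by
        gcongr
        nlinarith [pi_gt_three, (Nat.cast_nonneg n : (0 : ℝ) ≤ n)]
    _ ≤ n ! := Stirling.le_factorial_stirling n

lemma add_pow_le_pow_mul_exp {x y : ℝ} (hx : 0 < x) (hy : 0 ≤ y) (n : ℕ) :
    (x + y) ^ n ≤ x ^ n * exp (n * y / x) := by
  have hbase : x + y ≤ x * exp (y / x) := by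
    calc x + y = x * (y / x + 1) := by field_simp; ring
      _ ≤ x * exp (y / x) := by gcongr; exact add_one_le_exp _
  calc (x + y) ^ n ≤ (x * exp (y / x)) ^ n := by gcongr
    _ = x ^ n * exp (n * y / x) := by rw [mul_pow, ← exp_nat_mul, mul_div_assoc]

lemma summable_one_div_mul_sqrt : Summable fun n : ℕ ↦ 1 / (n * √n) := by
  refine (summable_nat_rpow_inv.mpr (by norm_num : (1 : ℝ) < 3 / 2)).congr fun n ↦ ?_
  rcases n.eq_zero_or_pos with rfl | hn
  · simp
  · rw [show (3 / 2 : ℝ) = 1 + 1 / 2 by norm_num, rpow_add (by positivity), rpow_one,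
      ← sqrt_eq_rpow, one_div]

lemma summable_add_pow_mul_exp_neg_div_factorial {X : ℝ} (hX : 0 ≤ X) :
    Summable fun k : ℕ ↦ ((k : ℝ) + X) ^ (k - 1) * exp (-k) / k ! := by
  refine .of_norm_bounded_eventually_nat (summable_one_div_mul_sqrt.mul_left (exp X)) ?_
  filter_upwards [eventually_ge_atTop 1] with k hk
  have hk0 : (0 : ℝ) < k := by exact_mod_cast hk
  have hpow : ((k : ℝ) + X) ^ (k - 1) ≤ (k : ℝ) ^ (k - 1) * exp X := by
    refine (add_pow_le_pow_mul_exp hk0 hX _).trans ?_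
    gcongr
    rw [div_le_iff₀ hk0, mul_comm]
    gcongr
    exact_mod_cast Nat.sub_le k 1
  have hk_pow : (k : ℝ) ^ k = k ^ (k - 1) * k := by
    rw [← pow_succ, Nat.sub_add_cancel hk]
  rw [norm_of_nonneg (by positivity)]
  calc ((k : ℝ) + X) ^ (k - 1) * exp (-k) / k !
      ≤ (k : ℝ) ^ (k - 1) * exp X * exp (-k) / (√k * (k : ℝ) ^ k * exp (-k)) := by
        gcongr
        exact sqrt_mul_pow_mul_exp_neg_le_factorial k
    _ = exp X * (1 / (k * √k)) := by
        rw [hk_pow]; field_simp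

noncomputable def fTerm (m c : ℝ) (k : ℕ) : ℝ :=
  ((k : ℝ) * m + 1) ^ (k - 1) * c ^ k *
    exp (-c * ((k : ℝ) * m + 1) / m) / (m ^ k * (k ! : ℝ))

lemma continuousOn_fTerm (k : ℕ) :
    ContinuousOn (fun p : ℝ × ℝ ↦ fTerm p.1 p.2 k) {p | p.1 ≠ 0} := by
  unfold fTerm
  refine .div (.mul (by fun_prop) ?_) (by fun_prop) fun p hp ↦ by simp_all [factorial_ne_zero]
  exact continuous_exp.comp_continuousOn (.div (by fun_prop) (by fun_prop) fun p hp ↦ hp)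

lemma fTerm_succ {m : ℝ} (hm : m ≠ 0) (c : ℝ) (j : ℕ) :
    fTerm m c (j + 1) =
      ((j + 1 : ℝ) + 1 / m) ^ j * (c * exp (-c)) ^ (j + 1) * exp (-c / m) / (m * (j + 1)!) := by
  have hexp :
      exp (-c * (((j + 1 : ℕ) : ℝ) * m + 1) / m) = exp (-c) ^ (j + 1) * exp (-c / m) := by
    rw [← exp_nat_mul, ← exp_add]; congr 1; field_simp; ring
  have hbase : ((j + 1 : ℕ) : ℝ) * m + 1 = ((j + 1 : ℝ) + 1 / m) * m := by
    push_cast; field_simp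
  rw [fTerm, hexp, hbase, Nat.add_sub_cancel, mul_pow, mul_pow, pow_succ m j]
  field_simp

lemma fTerm_le {a m c : ℝ} (ha : 0 < a) (ham : a ≤ m) (hc : 0 ≤ c) (k : ℕ) :
    ‖fTerm m c k‖ ≤ (1 + 1 / a) * (((k : ℝ) + 1 / a) ^ (k - 1) * exp (-k) / k !) := by
  have hm : 0 < m := ha.trans_le ham
  have hexp_le_one : exp (-c / m) ≤ 1 :=
    exp_le_one_iff.mpr (by rw [neg_div, neg_nonpos]; positivity)
  rcases k with _ | j
  · have hterm : fTerm m c 0 = exp (-c / m) := by simp [fTerm]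
    rw [hterm, norm_of_nonneg (exp_pos _).le]
    calc exp (-c / m) ≤ 1 + 1 / a := hexp_le_one.trans (by simp [ha.le])
      _ = _ := by simp
  rw [fTerm_succ hm.ne', norm_of_nonneg (by positivity)]
  calc ((j + 1 : ℝ) + 1 / m) ^ j * (c * exp (-c)) ^ (j + 1) * exp (-c / m) / (m * (j + 1)!)
      ≤ ((j + 1 : ℝ) + 1 / a) ^ j * exp (-1) ^ (j + 1) * 1 / (a * (j + 1)!) := by
        gcongr
        exact mul_exp_neg_le_exp_neg_one c
    _ = 1 / a *
          ((((j + 1 : ℕ) : ℝ) + 1 / a) ^ (j + 1 - 1) * exp (-(j + 1 : ℕ)) / (j + 1)!) := by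
        rw [← exp_nat_mul, Nat.add_sub_cancel]; push_cast; field_simp
    _ ≤ _ := by gcongr; linarith

lemma continuousOn_f_Ici_prod_Ici {a : ℝ} (ha : 0 < a) :
    ContinuousOn (fun p : ℝ × ℝ ↦ f p.1 p.2) (Ici a ×ˢ Ici 0) :=
  continuousOn_tsum (fun k ↦ (continuousOn_fTerm k).mono fun p hp ↦ (ha.trans_le hp.1).ne')
    ((summable_add_pow_mul_exp_neg_div_factorial (by positivity)).mul_left _)
    fun k p hp ↦ fTerm_le ha hp.1 hp.2 k

theorem f_continuousOn :
    ContinuousOn (fun p : ℝ × ℝ => f p.1 p.2) {p : ℝ × ℝ | 0 < p.1 ∧ 0 < p.2} := by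
  rintro p ⟨hm, hc⟩
  have hnhds : Ici (p.1 / 2) ×ˢ Ici 0 ∈ 𝓝 p :=
    prod_mem_nhds (Ici_mem_nhds (half_lt_self hm)) (Ici_mem_nhds hc)
  exact ((continuousOn_f_Ici_prod_Ici (half_pos hm)).continuousAt hnhds).continuousWithinAt
end

section
/- For every real number c with 0 < c ≤ 1, f(1,c) = 1. -/
/-!
Write `T x = ∑ₖ (k+1)^(k-1) x^k / k!`, so that `f 1 c = e^(-c) T(c e^(-c))` and the claim becomes
`T(c e^(-c)) = e^c`. For small `c`, expanding every `e^(-c(k+1))` into its power series gives an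
absolutely convergent double series whose terms with `k + j = n` add up to `c^n / n!` times the
`n`-th finite difference at `0` of the polynomial `(x+1)^(n-1)`; this vanishes for `n ≥ 1`.
Since `(k+1)^(k-1) / k! ≤ e^(k+1)`, the radius of convergence of `T` is at least `1/e`, and
`c e^(-c) < 1/e` for `c ≠ 1`, so both sides are analytic in `c` on `(0,1)` and the identity
propagates there. At `c = 1`, where `c e^(-c) = 1/e`, the terms of `T(1/e)` dominate those of every
`T(c e^(-c))`, and each partial sum of `T(1/e)` is a limit of partial sums at `c < 1`;
together these give `T(1/e) = e`.
-/

open Filter Finset Real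
open scoped Nat Topology

theorem Polynomial.sum_range_alternating_choose_mul_eval_eq_zero {R : Type*} [CommRing R]
    {P : Polynomial R} {n : ℕ} (hP : P.natDegree < n) :
    ∑ k ∈ range (n + 1), (-1) ^ (n - k) * (n.choose k : R) * P.eval (k : R) = 0 := by
  have h := congrFun (Polynomial.fwdDiff_iter_eq_zero_of_degree_lt hP) 0
  rw [fwdDiff_iter_eq_sum_shift] at h
  simpa [zsmul_eq_mul, mul_assoc] using h

theorem Summable.tsum_eq_tsum_sum_antidiagonal {α A : Type*} [AddCommMonoid α]
    [TopologicalSpace α] [ContinuousAdd α] [T3Space α] [AddCommMonoid A] [HasAntidiagonal A]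
    {F : A × A → α} (hF : Summable F) : ∑' p, F p = ∑' n, ∑ kl ∈ antidiagonal n, F kl := by
  rw [← HasAntidiagonal.sigmaAntidiagonalEquivProd.tsum_eq F]
  refine ((HasAntidiagonal.sigmaAntidiagonalEquivProd.summable_iff.mpr hF).tsum_sigma'
    fun n ↦ (hasSum_fintype _).summable).trans ?_
  exact tsum_congr fun n ↦ (tsum_fintype _).trans (Finset.sum_coe_sort _ _)

lemma Real.hasSum_pow_div_factorial (x : ℝ) : HasSum (fun n ↦ x ^ n / n !) (exp x) := by
  rw [Real.exp_eq_exp_ℝ]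
  exact NormedSpace.expSeries_div_hasSum_exp x

section ExpExpansion

variable {a t : ℕ → ℝ}

lemma summable_mul_pow_div_factorial (h : Summable fun k ↦ |a k| * exp |t k|) :
    Summable fun p : ℕ × ℕ ↦ a p.1 * t p.1 ^ p.2 / p.2 ! := by
  have habs (k : ℕ) : HasSum (fun j ↦ |a k * t k ^ j / (j ! : ℝ)|) (|a k| * exp |t k|) := by
    simpa [abs_mul, abs_div, abs_pow, mul_div_assoc] using
      (hasSum_pow_div_factorial |t k|).mul_left |a k|
  refine Summable.of_abs ((summable_prod_of_nonneg fun _ ↦ abs_nonneg _).mpr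
    ⟨fun k ↦ (habs k).summable, ?_⟩)
  simpa only [fun k ↦ (habs k).tsum_eq] using h

lemma tsum_mul_pow_div_factorial (h : Summable fun k ↦ |a k| * exp |t k|) :
    ∑' p : ℕ × ℕ, a p.1 * t p.1 ^ p.2 / p.2 ! = ∑' k, a k * exp (t k) := by
  have hrow (k : ℕ) : HasSum (fun j ↦ a k * t k ^ j / j !) (a k * exp (t k)) := by
    simpa only [mul_div_assoc] using (hasSum_pow_div_factorial (t k)).mul_left (a k)
  rw [(summable_mul_pow_div_factorial h).tsum_prod' fun k ↦ (hrow k).summable]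
  exact tsum_congr fun k ↦ (hrow k).tsum_eq

end ExpExpansion

noncomputable def treeCoeff (k : ℕ) : ℝ := ((k : ℝ) + 1) ^ (k - 1) / k !

@[simp] lemma treeCoeff_zero : treeCoeff 0 = 1 := by simp [treeCoeff]

lemma treeCoeff_nonneg (k : ℕ) : 0 ≤ treeCoeff k := by
  unfold treeCoeff; positivity

lemma treeCoeff_le_exp (k : ℕ) : treeCoeff k ≤ exp (k + 1) := calc
  treeCoeff k ≤ ((k : ℝ) + 1) ^ k / k ! := by
    unfold treeCoeff
    gcongr
    · linarith
    · omega
  _ = ((k : ℝ) + 1) ^ (k + 1) / (k + 1)! := by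
    push_cast [Nat.factorial_succ, pow_succ]
    field_simp
  _ ≤ exp (k + 1) := pow_div_factorial_le_exp _ (by positivity) _

lemma treeCoeff_mul_pow_le {x : ℝ} (hx : 0 ≤ x) (k : ℕ) :
    treeCoeff k * x ^ k ≤ exp 1 * (exp 1 * x) ^ k := calc
  treeCoeff k * x ^ k ≤ exp (k + 1) * x ^ k := by gcongr; exact treeCoeff_le_exp k
  _ = exp 1 * (exp 1 * x) ^ k := by
    rw [mul_pow, ← exp_nat_mul, mul_one, add_comm, exp_add]; ring

lemma summable_treeCoeff_mul_pow {x : ℝ} (hx : |x| < exp (-1)) :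
    Summable fun k ↦ treeCoeff k * x ^ k := by
  have hratio : exp 1 * |x| < 1 := by
    calc exp 1 * |x| < exp 1 * exp (-1) := by gcongr
      _ = 1 := by rw [← exp_add, add_neg_cancel, exp_zero]
  refine Summable.of_norm_bounded
    ((summable_geometric_of_lt_one (by positivity) hratio).mul_left (exp 1)) fun k ↦ ?_
  rw [norm_mul, norm_pow, Real.norm_of_nonneg (treeCoeff_nonneg k), Real.norm_eq_abs]
  exact treeCoeff_mul_pow_le (abs_nonneg x) k

noncomputable def treeSeries : FormalMultilinearSeries ℝ ℝ ℝ :=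
  FormalMultilinearSeries.ofScalars ℝ treeCoeff

lemma treeSeries_sum_eq (x : ℝ) : treeSeries.sum x = ∑' k, treeCoeff k * x ^ k :=
  FormalMultilinearSeries.ofScalars_sum_eq treeCoeff x

lemma exp_neg_one_le_radius_treeSeries : ENNReal.ofReal (exp (-1)) ≤ treeSeries.radius := by
  refine treeSeries.le_radius_of_bound (exp 1) fun k ↦ ?_
  rw [treeSeries, FormalMultilinearSeries.ofScalars_norm, Real.norm_of_nonneg (treeCoeff_nonneg k),
    Real.coe_toNNReal _ (exp_pos _).le]
  simpa [← exp_add] using treeCoeff_mul_pow_le (exp_pos (-1)).le k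

lemma analyticAt_treeSeries_sum {x : ℝ} (hx : |x| < exp (-1)) :
    AnalyticAt ℝ treeSeries.sum x := by
  refine (treeSeries.hasFPowerSeriesOnBall ?_).analyticAt_of_mem ?_
  · exact lt_of_lt_of_le (by simpa using exp_pos (-1)) exp_neg_one_le_radius_treeSeries
  · rw [Metric.mem_eball, edist_zero_right]
    refine lt_of_lt_of_le ?_ exp_neg_one_le_radius_treeSeries
    rwa [← ofReal_norm, ENNReal.ofReal_lt_ofReal_iff (exp_pos _), Real.norm_eq_abs]

lemma sum_antidiagonal_treeCoeff_expansion_eq_zero (c : ℝ) {n : ℕ} (hn : n ≠ 0) :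
    ∑ kl ∈ antidiagonal n,
      treeCoeff kl.1 * c ^ kl.1 * (-(c * (kl.1 + 1))) ^ kl.2 / (kl.2 ! : ℝ) = 0 := by
  have hterm : ∀ k ∈ range (n + 1),
      treeCoeff k * c ^ k * (-(c * (k + 1))) ^ (n - k) / (n - k)! =
        c ^ n / n ! * ((-1) ^ (n - k) * n.choose k * ((k : ℝ) + 1) ^ (n - 1)) := by
    intro k hk
    have hkn : k ≤ n := Nat.lt_succ_iff.mp (mem_range.mp hk)
    have hpow :
        ((k : ℝ) + 1) ^ (k - 1) * ((k : ℝ) + 1) ^ (n - k) = ((k : ℝ) + 1) ^ (n - 1) := by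
      rcases Nat.eq_zero_or_pos k with rfl | hk0
      · simp
      · rw [← pow_add]; congr 1; omega
    rw [Nat.cast_choose ℝ hkn, treeCoeff, neg_pow, mul_pow, ← hpow]
    field_simp
    rw [← pow_add, Nat.add_sub_cancel' hkn]
  rw [Nat.sum_antidiagonal_eq_sum_range_succ_mk, sum_congr rfl hterm, ← mul_sum]
  have := Polynomial.sum_range_alternating_choose_mul_eval_eq_zero
    (P := (Polynomial.X + Polynomial.C 1 : Polynomial ℝ) ^ (n - 1)) (n := n) (by
      rw [Polynomial.natDegree_pow, Polynomial.natDegree_X_add_C]; omega)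
  simp only [Polynomial.eval_pow, Polynomial.eval_add, Polynomial.eval_X, Polynomial.eval_C] at this
  rw [this, mul_zero]

lemma abs_mul_exp_lt_exp_neg_one {c : ℝ} (hc0 : 0 < c) (hc : c < 1 / 8) :
    |c * exp c| < exp (-1) := by
  have hexp : exp (c + 1) < 8 := calc
    exp (c + 1) < exp 1 * exp 1 := by rw [← exp_add]; gcongr; linarith
    _ < 8 := by nlinarith [exp_one_lt_d9, exp_pos 1]
  rw [abs_of_pos (by positivity)]
  calc c * exp c = c * exp (c + 1) * exp (-1) := by rw [mul_assoc, ← exp_add]; ring_nf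
    _ < 1 * exp (-1) := by gcongr; nlinarith [exp_pos (c + 1)]
    _ = exp (-1) := one_mul _

lemma tsum_treeCoeff_mul_pow_of_lt {c : ℝ} (hc0 : 0 < c) (hc : c < 1 / 8) :
    ∑' k, treeCoeff k * (c * exp (-c)) ^ k = exp c := by
  have habs : Summable fun k ↦ |treeCoeff k * c ^ k| * exp |-(c * (k + 1))| := by
    refine ((summable_treeCoeff_mul_pow (abs_mul_exp_lt_exp_neg_one hc0 hc)).mul_left (exp c)).congr
      fun k ↦ ?_
    rw [abs_neg, abs_of_nonneg (mul_nonneg (treeCoeff_nonneg k) (by positivity)),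
      abs_of_pos (by positivity : 0 < c * (k + 1)),
      show c * (k + 1) = k * c + c by ring, exp_add, exp_nat_mul]
    ring
  have hsum := tsum_mul_pow_div_factorial habs
  rw [(summable_mul_pow_div_factorial habs).tsum_eq_tsum_sum_antidiagonal,
    tsum_eq_single 0 fun n hn ↦ sum_antidiagonal_treeCoeff_expansion_eq_zero c hn] at hsum
  have hterm (k : ℕ) : treeCoeff k * c ^ k * exp (-(c * (k + 1))) =
      exp (-c) * (treeCoeff k * (c * exp (-c)) ^ k) := by
    rw [show -(c * (k + 1)) = k * -c + -c by ring, exp_add, exp_nat_mul]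
    ring
  simp only [hterm, tsum_mul_left] at hsum
  norm_num [treeCoeff_zero] at hsum
  rw [← mul_right_inj' (exp_pos (-c)).ne', ← hsum, ← exp_add, neg_add_cancel, exp_zero]

lemma mul_exp_neg_lt_exp_neg_one {c : ℝ} (hc : c ≠ 1) : c * exp (-c) < exp (-1) := by
  have h := add_one_lt_exp (sub_ne_zero.mpr hc)
  calc c * exp (-c) < exp (c - 1) * exp (-c) := by gcongr; linarith
    _ = exp (-1) := by rw [← exp_add]; ring_nf

lemma abs_mul_exp_neg_lt_exp_neg_one {c : ℝ} (hc : c ∈ Set.Ioo (0 : ℝ) 1) :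
    |c * exp (-c)| < exp (-1) := by
  rw [abs_of_pos (mul_pos hc.1 (exp_pos _))]
  exact mul_exp_neg_lt_exp_neg_one hc.2.ne

lemma tsum_treeCoeff_mul_pow_of_mem_Ioo {c : ℝ} (hc : c ∈ Set.Ioo (0 : ℝ) 1) :
    ∑' k, treeCoeff k * (c * exp (-c)) ^ k = exp c := by
  rw [← treeSeries_sum_eq]
  have hanalytic : AnalyticOnNhd ℝ (fun c ↦ treeSeries.sum (c * exp (-c))) (Set.Ioo 0 1) :=
    fun c hc ↦ (analyticAt_treeSeries_sum (abs_mul_exp_neg_lt_exp_neg_one hc)).comp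
      (f := fun c ↦ c * exp (-c)) (by fun_prop)
  have hsmall : (fun c ↦ treeSeries.sum (c * exp (-c))) =ᶠ[𝓝 (1 / 16)] exp := by
    filter_upwards [Ioo_mem_nhds (show (0 : ℝ) < 1 / 16 by norm_num)
      (show (1 / 16 : ℝ) < 1 / 8 by norm_num)] with c hc
    rw [treeSeries_sum_eq, tsum_treeCoeff_mul_pow_of_lt hc.1 hc.2]
  exact hanalytic.eqOn_of_preconnected_of_eventuallyEq (analyticOnNhd_rexp.mono (Set.subset_univ _))
    isPreconnected_Ioo (by norm_num) hsmall hc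

lemma tsum_treeCoeff_mul_exp_neg_one_pow : ∑' k, treeCoeff k * exp (-1) ^ k = exp 1 := by
  have hmem : (1 : ℝ) ∈ closure (Set.Ioo 0 1) := by simp
  have hsummable {c : ℝ} (hc : c ∈ Set.Ioo (0 : ℝ) 1) :
      Summable fun k ↦ treeCoeff k * (c * exp (-c)) ^ k :=
    summable_treeCoeff_mul_pow (abs_mul_exp_neg_lt_exp_neg_one hc)
  have hnonneg (k : ℕ) : 0 ≤ treeCoeff k * exp (-1) ^ k :=
    mul_nonneg (treeCoeff_nonneg k) (by positivity)
  have hpartial (N : ℕ) : ∑ k ∈ range N, treeCoeff k * exp (-1) ^ k ≤ exp 1 := by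
    have hlt (c : ℝ) (hc : c ∈ Set.Ioo (0 : ℝ) 1) :
        ∑ k ∈ range N, treeCoeff k * (c * exp (-c)) ^ k ≤ exp c := by
      rw [← tsum_treeCoeff_mul_pow_of_mem_Ioo hc]
      exact (hsummable hc).sum_le_tsum _ fun k _ ↦
        mul_nonneg (treeCoeff_nonneg k) (pow_nonneg (mul_pos hc.1 (exp_pos _)).le k)
    simpa using le_on_closure (f := fun c ↦ ∑ k ∈ range N, treeCoeff k * (c * exp (-c)) ^ k)
      (g := exp) hlt (by fun_prop) (by fun_prop) hmem
  refine le_antisymm (Real.tsum_le_of_sum_range_le hnonneg hpartial) ?_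
  refine le_on_closure (f := exp) (g := fun _ ↦ ∑' k, treeCoeff k * exp (-1) ^ k)
    (fun c hc ↦ ?_) (by fun_prop) (by fun_prop) hmem
  rw [← tsum_treeCoeff_mul_pow_of_mem_Ioo hc]
  exact (hsummable hc).tsum_le_tsum (fun k ↦ by
    gcongr
    · exact treeCoeff_nonneg k
    · exact (mul_pos hc.1 (exp_pos _)).le
    · exact mul_exp_neg_le_exp_neg_one c) (summable_of_sum_range_le hnonneg hpartial)

lemma tsum_treeCoeff_mul_pow {c : ℝ} (hc0 : 0 < c) (hc1 : c ≤ 1) :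
    ∑' k, treeCoeff k * (c * exp (-c)) ^ k = exp c := by
  rcases hc1.lt_or_eq with hc1 | rfl
  · exact tsum_treeCoeff_mul_pow_of_mem_Ioo ⟨hc0, hc1⟩
  · simpa using tsum_treeCoeff_mul_exp_neg_one_pow

lemma f_one_eq (c : ℝ) : f 1 c = exp (-c) * ∑' k, treeCoeff k * (c * exp (-c)) ^ k := by
  rw [f, ← tsum_mul_left]
  refine tsum_congr fun k ↦ ?_
  rw [treeCoeff, show -c * (k * 1 + 1) / 1 = k * -c + -c by ring, exp_add, exp_nat_mul]
  ring

theorem f_one_eq_one (c : ℝ) (hc0 : 0 < c) (hc1 : c ≤ 1) : f 1 c = 1 := by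
  rw [f_one_eq, tsum_treeCoeff_mul_pow hc0 hc1, ← exp_add, neg_add_cancel, exp_zero]
end

section
/- For every positive integer m and every real number c > 1, f(m,c) lies in the open interval (0,1), satisfies f(m,c) = e^{-c(1 - f(m,c)^m)/m}, and is the unique y ∈ (0,1) satisfying y = e^{-c(1-y^m)/m}. -/
open Finset Real Set
open scoped Nat Complex

/-!
Put `x = (c/m) e^{-c}`. The `k`-th term of `f m c` is `e^{-c/m} (km+1)^{k-1} x^k / k!`, so `f m c`
is `e^{-c/m}` times the generalized exponential series `∑ (kt+1)^{k-1} w^k / k!` at `t = m`,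
`w = x`. That series equals `e^z` at `w = z e^{-tz}`: for small `z` expand `e^{-ktz}` and sum the
double series along antidiagonals, where Abel's identity `∑ C(n,k) (kt+1)^{k-1} (-kt)^{n-k} = 1`
collapses the `n`-th antidiagonal to `z^n/n!`; the identity then propagates by analytic
continuation to a star-shaped domain containing `[0, 1/t)`. For `c > 1` the root `d ∈ (0,1)` of
`d e^{-d} = c e^{-c}` gives `x = (d/m) e^{-d}`, hence `f m c = e^{(d-c)/m}`. Finally
`y = e^{(u-c)/m}` solves `y = e^{-c(1-y^m)/m}` iff `u e^{-u} = c e^{-c}`, and `s ↦ s e^{-s}` is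
injective on `[0,1]` while solutions `y ∈ (0,1)` have `u ∈ (0,1)`.
-/

section Abel

def abelSum {R : Type*} [CommRing R] (t : R) (n : ℕ) (y : R) : R :=
  ∑ k ∈ range (n + 1), n.choose k * (k * t + 1) ^ (k - 1) * (y - k * t) ^ (n - k)

open Polynomial in
theorem abelSum_neg_one {R : Type*} [CommRing R] (t : R) {n : ℕ} (hn : n ≠ 0) :
    abelSum t n (-1) = 0 := by
  -- this is the `n`-th forward difference at `0` of `r ↦ (r t + 1) ^ (n - 1)`, of degree `< n`
  have hdeg : ((C t * X + 1) ^ (n - 1)).natDegree < n :=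
    (natDegree_pow_le_of_le _ natDegree_linear_le).trans_lt (by omega)
  have := congrFun (fwdDiff_iter_eq_zero_of_degree_lt hdeg) 0
  rw [fwdDiff_iter_eq_sum_shift, Pi.zero_apply] at this
  rw [← this, abelSum]
  refine sum_congr rfl fun k hk => ?_
  have hkn : k ≤ n := Nat.lt_succ_iff.mp (mem_range.mp hk)
  have hpow : (k * t + 1) ^ (k - 1) * (k * t + 1) ^ (n - k) = (k * t + 1) ^ (n - 1) := by
    rcases k.eq_zero_or_pos with rfl | hk0
    · simp
    · rw [← pow_add]; congr 1; omega
  simp only [zsmul_eq_mul, eval_pow, eval_add, eval_mul, eval_C, eval_X, eval_one, zero_add,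
    nsmul_eq_mul, mul_one, Int.cast_mul, Int.cast_pow, Int.cast_neg, Int.cast_one, Int.cast_natCast]
  rw [show (-1 : R) - k * t = -1 * (k * t + 1) by ring, mul_pow, mul_comm t, ← hpow]
  ring

variable {𝕜 : Type*} [RCLike 𝕜]

theorem hasDerivAt_abelSum (t : 𝕜) (n : ℕ) (y : 𝕜) :
    HasDerivAt (abelSum t (n + 1)) ((n + 1) * abelSum t n y) y := by
  have h : HasDerivAt (abelSum t (n + 1)) (∑ k ∈ range (n + 2), (n + 1).choose k *
      (k * t + 1) ^ (k - 1) * ((n + 1 - k : ℕ) * (y - k * t) ^ (n - k) * 1)) y := by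
    unfold abelSum
    refine HasDerivAt.fun_sum fun k _ => ?_
    have := ((hasDerivAt_id y).sub_const (k * t : 𝕜)).pow (n + 1 - k)
    rw [Nat.sub_right_comm, Nat.add_sub_cancel] at this
    exact this.const_mul _
  convert h using 1
  rw [sum_range_succ, Nat.sub_self, Nat.cast_zero, zero_mul, zero_mul, mul_zero, add_zero, abelSum,
    mul_sum]
  refine sum_congr rfl fun k _ => ?_
  have := congrArg (Nat.cast (R := 𝕜)) (Nat.choose_mul_succ_eq n k)
  push_cast at this
  linear_combination ((k * t + 1) ^ (k - 1) * (y - k * t) ^ (n - k)) * this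

theorem abelSum_eq (t : 𝕜) (n : ℕ) (y : 𝕜) : abelSum t n y = (1 + y) ^ n := by
  induction n generalizing y with
  | zero => simp [abelSum]
  | succ n ih =>
    have hderiv (x : 𝕜) : HasDerivAt (fun x => abelSum t (n + 1) x - (1 + x) ^ (n + 1)) 0 x := by
      have := (hasDerivAt_abelSum t n x).fun_sub (((hasDerivAt_id x).const_add 1).fun_pow (n + 1))
      simpa [ih] using this
    have := is_const_of_deriv_eq_zero (fun x => (hderiv x).differentiableAt)
      (fun x => (hderiv x).deriv) y (-1)
    rw [abelSum_neg_one t n.succ_ne_zero] at this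
    simpa [sub_eq_zero] using this

end Abel

section GenExp

noncomputable def genExpCoeff (t : ℝ) (k : ℕ) : ℝ := (k * t + 1) ^ (k - 1) / k !

noncomputable def genExp (t : ℝ) (w : ℂ) : ℂ := ∑' k, (genExpCoeff t k : ℂ) * w ^ k

variable {t : ℝ}

lemma genExpCoeff_nonneg (ht : 0 ≤ t) (k : ℕ) : 0 ≤ genExpCoeff t k := by
  unfold genExpCoeff; positivity

lemma mul_add_one_pow_le (ht : 0 < t) (k : ℕ) : (k * t + 1) ^ k ≤ (k * t) ^ k * exp (1 / t) := by
  rcases k.eq_zero_or_pos with rfl | hk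
  · simpa using one_le_exp (by positivity : 0 ≤ 1 / t)
  have hkt : 0 < (k : ℝ) * t := by positivity
  have hle : (k : ℝ) * t + 1 ≤ k * t * exp (1 / (k * t)) := by
    have := add_one_le_exp (1 / (k * t))
    calc (k : ℝ) * t + 1 = k * t * (1 / (k * t) + 1) := by field_simp; ring
      _ ≤ k * t * exp (1 / (k * t)) := by gcongr
  calc ((k : ℝ) * t + 1) ^ k ≤ (k * t * exp (1 / (k * t))) ^ k := by gcongr
    _ = (k * t) ^ k * exp (1 / t) := by
      rw [mul_pow, ← exp_nat_mul]; field_simp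

lemma genExpCoeff_mul_pow_le (ht : 0 < t) {u : ℝ} (hu : 0 ≤ u) (k : ℕ) :
    genExpCoeff t k * u ^ k ≤ exp (1 / t) * (t * exp 1 * u) ^ k := by
  have h1 : (1 : ℝ) ≤ k * t + 1 := by linarith [show 0 ≤ (k : ℝ) * t by positivity]
  calc genExpCoeff t k * u ^ k ≤ (k * t + 1) ^ k / k ! * u ^ k := by
        unfold genExpCoeff; gcongr; exact k.sub_le 1
    _ ≤ (k * t) ^ k * exp (1 / t) / k ! * u ^ k := by gcongr; exact mul_add_one_pow_le ht k
    _ = exp (1 / t) * ((k : ℝ) ^ k / k !) * (t * u) ^ k := by ring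
    _ ≤ exp (1 / t) * exp k * (t * u) ^ k := by
        gcongr; exact pow_div_factorial_le_exp _ k.cast_nonneg k
    _ = exp (1 / t) * (t * exp 1 * u) ^ k := by
        rw [← exp_one_pow]; ring

lemma summable_genExpCoeff_mul_pow (ht : 0 < t) {u : ℝ} (hu : 0 ≤ u) (h : t * exp 1 * u < 1) :
    Summable fun k => genExpCoeff t k * u ^ k :=
  .of_nonneg_of_le (fun k => mul_nonneg (genExpCoeff_nonneg ht.le k) (by positivity))
    (genExpCoeff_mul_pow_le ht hu)
    ((summable_geometric_of_lt_one (by positivity) h).mul_left _)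

lemma differentiableOn_genExp (ht : 0 < t) :
    DifferentiableOn ℂ (genExp t) (Metric.ball 0 (t * exp 1)⁻¹) := by
  intro w hw
  rw [mem_ball_zero_iff] at hw
  obtain ⟨r, hwr, hrR⟩ := exists_between hw
  have hr0 : 0 < r := (norm_nonneg w).trans_lt hwr
  have hr : t * exp 1 * r < 1 := by
    have := mul_lt_mul_of_pos_left hrR (by positivity : 0 < t * exp 1)
    rwa [mul_inv_cancel₀ (by positivity)] at this
  have hdiff : DifferentiableOn ℂ (genExp t) (Metric.ball 0 r) := by
    refine Complex.differentiableOn_tsum_of_summable_norm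
      ((summable_geometric_of_lt_one (by positivity) hr).mul_left (exp (1 / t)))
      (fun k => ((differentiable_pow k).const_mul _).differentiableOn) Metric.isOpen_ball
      fun k v hv => ?_
    rw [norm_mul, norm_pow, Complex.norm_real, norm_of_nonneg (genExpCoeff_nonneg ht.le k)]
    exact (mul_le_mul_of_nonneg_left (pow_le_pow_left₀ (norm_nonneg v)
      (mem_ball_zero_iff.mp hv).le k) (genExpCoeff_nonneg ht.le k)).trans
      (genExpCoeff_mul_pow_le ht (by positivity) k)
  exact (hdiff.differentiableAt
    (Metric.isOpen_ball.mem_nhds (mem_ball_zero_iff.mpr hwr))).differentiableWithinAt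

lemma sum_range_genExpCoeff_eq_pow_div_factorial (t : ℝ) (n : ℕ) (z : ℂ) :
    ∑ k ∈ range (n + 1), (genExpCoeff t k : ℂ) * z ^ k * ((-(k * t * z)) ^ (n - k) / (n - k)!) =
      z ^ n / n ! := by
  have habel := abelSum_eq (t : ℂ) n 0
  rw [add_zero, one_pow, abelSum] at habel
  rw [← mul_one (z ^ n / n !), ← habel, mul_sum]
  refine sum_congr rfl fun k hk => ?_
  have hkn : k ≤ n := Nat.lt_succ_iff.mp (mem_range.mp hk)
  rw [Nat.cast_choose ℂ hkn, genExpCoeff]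
  have hz : z ^ n = z ^ k * z ^ (n - k) := by rw [← pow_add, Nat.add_sub_cancel' hkn]
  have hn : (n ! : ℂ) ≠ 0 := Nat.cast_ne_zero.mpr n.factorial_ne_zero
  push_cast
  rw [hz]
  field_simp
  ring

theorem genExp_mul_cexp_neg_of_small (ht : 0 < t) {z : ℂ}
    (hz : t * exp 1 * (‖z‖ * exp (t * ‖z‖)) < 1) : genExp t (z * cexp (-t * z)) = cexp z := by
  have hrexp (x : ℝ) : HasSum (fun j => x ^ j / j !) (exp x) := by
    rw [Real.exp_eq_exp_ℝ]; exact NormedSpace.expSeries_div_hasSum_exp x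
  have hcexp (w : ℂ) : HasSum (fun j => w ^ j / j !) (cexp w) := by
    rw [Complex.exp_eq_exp_ℂ]; exact NormedSpace.expSeries_div_hasSum_exp w
  set F : ℕ × ℕ → ℂ := fun p => genExpCoeff t p.1 * z ^ p.1 * ((-(p.1 * t * z)) ^ p.2 / p.2 !)
  have hnorm (p : ℕ × ℕ) :
      ‖F p‖ = genExpCoeff t p.1 * ‖z‖ ^ p.1 * ((p.1 * t * ‖z‖) ^ p.2 / p.2 !) := by
    simp only [F, norm_mul, norm_div, norm_pow, norm_neg, Complex.norm_real, Complex.norm_natCast,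
      norm_of_nonneg (genExpCoeff_nonneg ht.le _), norm_of_nonneg ht.le]
  have hrow_norm (k : ℕ) :
      HasSum (fun j => ‖F (k, j)‖) (genExpCoeff t k * (‖z‖ * exp (t * ‖z‖)) ^ k) := by
    rw [mul_pow, ← exp_nat_mul, ← mul_assoc, ← mul_assoc]
    simp only [hnorm]
    exact (hrexp _).mul_left _
  have hF : Summable F := by
    refine .of_norm ((summable_prod_of_nonneg fun p => norm_nonneg _).mpr
      ⟨fun k => (hrow_norm k).summable, ?_⟩)
    simp only [(hrow_norm _).tsum_eq]
    exact summable_genExpCoeff_mul_pow ht (by positivity) hz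
  have hrow (k : ℕ) :
      HasSum (fun j => F (k, j)) (genExpCoeff t k * (z * cexp (-t * z)) ^ k) := by
    rw [mul_pow, ← Complex.exp_nat_mul, ← mul_assoc,
      show (k : ℂ) * (-t * z) = -(k * t * z) by ring]
    exact (hcexp (-(k * t * z))).mul_left ((genExpCoeff t k : ℂ) * z ^ k)
  have hdiag : HasSum (fun n => ∑ p ∈ antidiagonal n, F p) (∑' p, F p) := by
    have := (HasAntidiagonal.sigmaAntidiagonalEquivProd.hasSum_iff.mpr hF.hasSum).sigma
      fun n => hasSum_fintype _
    convert this using 2 with n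
    exact (sum_coe_sort _ _).symm
  have hsum : ∑' p, F p = cexp z := by
    refine hdiag.unique ?_
    convert hcexp z using 2 with n
    rw [Nat.sum_antidiagonal_eq_sum_range_succ_mk,
      ← sum_range_genExpCoeff_eq_pow_div_factorial t n z]
  rw [genExp, ← hsum]
  exact (hF.hasSum.prod_fiberwise hrow).tsum_eq

lemma mul_exp_neg_mul_le_exp_neg {a s : ℝ} (ha : a ≤ 1) (hs : s ≤ 1) :
    a * exp (-(a * s)) ≤ exp (-s) := by
  calc a * exp (-(a * s)) ≤ exp (a - 1) * exp (-(a * s)) := by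
        gcongr; linarith [add_one_le_exp (a - 1)]
    _ = exp (a - 1 - a * s) := by rw [← exp_add]; ring_nf
    _ ≤ exp (-s) := exp_le_exp.mpr (by nlinarith)

lemma norm_mul_cexp_neg_mul (t : ℝ) (z : ℂ) : ‖z * cexp (-t * z)‖ = ‖z‖ * exp (-(t * z.re)) := by
  rw [norm_mul, Complex.norm_exp]
  congr 2
  simp

/-- Without `t * re z < 1` the domain would also reach real `θ > 1/t`, where `θ e^{-tθ}` equals
`θ' e^{-tθ'}` for some `θ' < 1/t` and the series sums to `e^{θ'}`, not `e^θ`. -/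
def genExpDomain (t : ℝ) : Set ℂ :=
  {z | t * z.re < 1} ∩ (fun z => z * cexp (-t * z)) ⁻¹' Metric.ball 0 (t * exp 1)⁻¹

lemma isOpen_genExpDomain (t : ℝ) : IsOpen (genExpDomain t) :=
  (isOpen_lt (by fun_prop) continuous_const).inter (Metric.isOpen_ball.preimage (by fun_prop))

lemma zero_mem_genExpDomain (ht : 0 < t) : 0 ∈ genExpDomain t :=
  ⟨by simp, by simp; positivity⟩

lemma starConvex_genExpDomain (t : ℝ) : StarConvex ℝ 0 (genExpDomain t) := by
  refine starConvex_zero_iff.mpr fun z ⟨(hre : t * z.re < 1), hnorm⟩ a ha₀ ha₁ => ⟨?_, ?_⟩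
  · show t * (a • z).re < 1
    rw [Complex.smul_re, smul_eq_mul]
    rcases le_or_gt (t * z.re) 0 with h | h <;> nlinarith
  · simp only [Set.mem_preimage, mem_ball_zero_iff, norm_mul_cexp_neg_mul] at hnorm ⊢
    rw [Complex.smul_re, smul_eq_mul, norm_smul, norm_of_nonneg ha₀]
    calc a * ‖z‖ * exp (-(t * (a * z.re))) = ‖z‖ * (a * exp (-(a * (t * z.re)))) := by ring_nf
      _ ≤ ‖z‖ * exp (-(t * z.re)) := by
        gcongr; exact mul_exp_neg_mul_le_exp_neg ha₁ hre.le
      _ < _ := hnorm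

theorem genExp_mul_cexp_neg (ht : 0 < t) {z : ℂ} (hz : z ∈ genExpDomain t) :
    genExp t (z * cexp (-t * z)) = cexp z := by
  have hanalytic : AnalyticOnNhd ℂ (fun z => genExp t (z * cexp (-t * z))) (genExpDomain t) :=
    ((differentiableOn_genExp ht).comp
      (by fun_prop : Differentiable ℂ fun z => z * cexp (-t * z)).differentiableOn
      fun _ hz => hz.2).analyticOnNhd (isOpen_genExpDomain t)
  have hsmall : ∀ᶠ z in nhds (0 : ℂ), t * exp 1 * (‖z‖ * exp (t * ‖z‖)) < 1 :=
    (isOpen_lt (by fun_prop) continuous_const).mem_nhds (by simp)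
  have hconn : IsPreconnected (genExpDomain t) :=
    ((starConvex_genExpDomain t).isPathConnected
      (zero_mem_genExpDomain ht)).isConnected.isPreconnected
  refine hanalytic.eqOn_of_preconnected_of_eventuallyEq (analyticOnNhd_cexp.mono (subset_univ _))
    hconn (zero_mem_genExpDomain ht) ?_ hz
  filter_upwards [hsmall] with z hz using genExp_mul_cexp_neg_of_small ht hz

lemma mul_exp_one_sub_lt_one {d : ℝ} (hd : d ≠ 1) : d * exp (1 - d) < 1 := by
  have := add_one_lt_exp (sub_ne_zero.mpr hd)
  calc d * exp (1 - d) < exp (d - 1) * exp (1 - d) := by gcongr; linarith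
    _ = 1 := by rw [← exp_add]; simp

theorem hasSum_genExpCoeff_mul_pow (ht : 0 < t) {θ : ℝ} (hθ₀ : 0 ≤ θ) (hθ : t * θ < 1) :
    HasSum (fun k => genExpCoeff t k * (θ * exp (-(t * θ))) ^ k) (exp θ) := by
  have hlt : t * exp 1 * (θ * exp (-(t * θ))) < 1 := by
    convert mul_exp_one_sub_lt_one hθ.ne using 1
    rw [sub_eq_add_neg, exp_add]; ring
  have hmem : (θ : ℂ) ∈ genExpDomain t := by
    refine ⟨by simpa using hθ, ?_⟩
    rw [Set.mem_preimage, mem_ball_zero_iff, norm_mul_cexp_neg_mul, Complex.ofReal_re,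
      Complex.norm_real, norm_of_nonneg hθ₀, ← mul_one (t * exp 1)⁻¹,
      lt_inv_mul_iff₀ (by positivity)]
    exact hlt
  have hsum := summable_genExpCoeff_mul_pow ht (by positivity) hlt
  convert hsum.hasSum
  apply Complex.ofReal_injective
  rw [Complex.ofReal_exp, ← genExp_mul_cexp_neg ht hmem, genExp, Complex.ofReal_tsum]
  push_cast
  simp only [neg_mul]

end GenExp

lemma hasDerivAt_mul_exp_neg (s : ℝ) :
    HasDerivAt (fun s => s * exp (-s)) ((1 - s) * exp (-s)) s :=
  ((hasDerivAt_id' s).fun_mul (hasDerivAt_neg s).exp).congr_deriv (by ring)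

lemma strictMonoOn_mul_exp_neg : StrictMonoOn (fun s => s * exp (-s)) (Icc 0 1) := by
  refine strictMonoOn_of_deriv_pos (convex_Icc 0 1)
    (fun s _ => (hasDerivAt_mul_exp_neg s).continuousAt.continuousWithinAt) fun s hs => ?_
  rw [interior_Icc] at hs
  rw [(hasDerivAt_mul_exp_neg s).deriv]
  exact mul_pos (by linarith [hs.2]) (exp_pos _)

lemma strictAntiOn_mul_exp_neg : StrictAntiOn (fun s => s * exp (-s)) (Ici 1) := by
  refine strictAntiOn_of_deriv_neg (convex_Ici 1)
    (fun s _ => (hasDerivAt_mul_exp_neg s).continuousAt.continuousWithinAt) fun s hs => ?_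
  rw [interior_Ici] at hs
  rw [(hasDerivAt_mul_exp_neg s).deriv]
  exact mul_neg_of_neg_of_pos (by linarith [mem_Ioi.mp hs]) (exp_pos _)

lemma exists_mem_Ioo_mul_exp_neg_eq {c : ℝ} (hc : 1 < c) :
    ∃ d ∈ Set.Ioo 0 1, d * exp (-d) = c * exp (-c) := by
  have hcont : ContinuousOn (fun s => s * exp (-s)) (Icc 0 1) := by fun_prop
  refine intermediate_value_Ioo zero_le_one hcont ⟨?_, ?_⟩
  · simpa using mul_pos (zero_lt_one.trans hc) (exp_pos (-c))
  · exact strictAntiOn_mul_exp_neg self_mem_Ici hc.le hc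

lemma lt_one_of_mul_exp_neg_eq {w c : ℝ} (hwc : w < c) (h : w * exp (-w) = c * exp (-c)) :
    w < 1 := by
  by_contra! hw
  exact (strictAntiOn_mul_exp_neg hw (hw.trans hwc.le) hwc).ne' h

lemma exp_div_eq_iff_mul_exp_neg_eq {m : ℕ} (hm : m ≠ 0) (c w : ℝ) :
    exp ((w - c) / m) = exp (-c * (1 - exp ((w - c) / m) ^ m) / m) ↔
      w * exp (-w) = c * exp (-c) := by
  have hm' : (m : ℝ) ≠ 0 := Nat.cast_ne_zero.mpr hm
  have hexp : exp w * exp (-w) = 1 := by rw [← exp_add, add_neg_cancel, exp_zero]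
  rw [← exp_nat_mul, mul_div_cancel₀ _ hm', exp_eq_exp, div_left_inj' hm', sub_eq_add_neg w,
    exp_add]
  constructor <;> intro h
  · linear_combination exp (-w) * h + c * exp (-c) * hexp
  · linear_combination exp w * h - w * hexp

theorem f_eq_exp {M c d : ℝ} (hM : 0 < M) (hd₀ : 0 ≤ d) (hd₁ : d < 1)
    (hdc : d * exp (-d) = c * exp (-c)) : f M c = exp ((d - c) / M) := by
  have hsum := hasSum_genExpCoeff_mul_pow hM (div_nonneg hd₀ hM.le)
    (by rwa [mul_div_cancel₀ _ hM.ne'])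
  have hx : d / M * exp (-(M * (d / M))) = c / M * exp (-c) := by
    rw [mul_div_cancel₀ _ hM.ne', div_mul_eq_mul_div, hdc, div_mul_eq_mul_div]
  have hterm (k : ℕ) : ((k : ℝ) * M + 1) ^ (k - 1) * c ^ k * exp (-c * ((k : ℝ) * M + 1) / M) /
      (M ^ k * k !) = exp (-(c / M)) * (genExpCoeff M k * (c / M * exp (-c)) ^ k) := by
    rw [genExpCoeff, mul_pow, div_pow, ← exp_nat_mul, show -c * ((k : ℝ) * M + 1) / M =
      k * -c + -(c / M) by field_simp; ring, exp_add]
    field_simp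
  rw [f, tsum_congr hterm, ← hx, (hsum.mul_left _).tsum_eq, ← exp_add]
  congr 1
  ring

theorem f_supercritical (m : ℕ) (hm : 0 < m) (c : ℝ) (hc : 1 < c) :
    f (m : ℝ) c ∈ Set.Ioo (0 : ℝ) 1 ∧
      f (m : ℝ) c = Real.exp (-c * (1 - f (m : ℝ) c ^ m) / m) ∧
      ∀ y ∈ Set.Ioo (0 : ℝ) 1, y = Real.exp (-c * (1 - y ^ m) / m) → y = f (m : ℝ) c := by
  obtain ⟨d, ⟨hd₀, hd₁⟩, hdc⟩ := exists_mem_Ioo_mul_exp_neg_eq hc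
  have hm' : (0 : ℝ) < m := Nat.cast_pos.mpr hm
  have hf : f m c = exp ((d - c) / m) := f_eq_exp hm' hd₀.le hd₁ hdc
  refine ⟨?_, ?_, fun y ⟨hy₀, hy₁⟩ hy => ?_⟩
  · rw [hf]
    exact ⟨exp_pos _, Real.exp_lt_one_iff.mpr (div_neg_of_neg_of_pos (by linarith) hm')⟩
  · rw [hf]
    exact (exp_div_eq_iff_mul_exp_neg_eq hm.ne' c d).mpr hdc
  set u := c + m * log y
  have hyu : y = exp ((u - c) / m) := by
    rw [add_sub_cancel_left, mul_div_cancel_left₀ _ hm'.ne', exp_log hy₀]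
  rw [hyu] at hy
  have huc : u * exp (-u) = c * exp (-c) := (exp_div_eq_iff_mul_exp_neg_eq hm.ne' c u).mp hy
  have hu₀ : 0 < u := by
    have : 0 < u * exp (-u) := by rw [huc]; exact mul_pos (by linarith) (exp_pos _)
    exact pos_of_mul_pos_left this (exp_pos _).le
  have hu₁ : u < 1 :=
    lt_one_of_mul_exp_neg_eq (by nlinarith [log_neg hy₀ hy₁]) huc
  have hud : u = d :=
    strictMonoOn_mul_exp_neg.injOn ⟨hu₀.le, hu₁.le⟩ ⟨hd₀.le, hd₁.le⟩ (huc.trans hdc.symm)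
  rw [hyu, hf, hud]
end

section
/- For every positive real number m and every real number x with |x| ≤ 1/e, the series defining g(m,x) is absolutely summable: the sequence k ↦ (km+1)^{k-1} x^k / (m^k k!) is summable over ℕ (indeed absolutely summable) whenever |x| ≤ 1/e. -/
/-!
For `k ≥ 1` the `k`-th term has absolute value `(k + 1/m)^(k-1) |x|^k / (m k!)`, and
`(k + 1/m)^(k-1) ≤ k^(k-1) e^(1/m)`. Stirling's bound `k! ≥ √(2πk) (k/e)^k` together with
`|x| ≤ 1/e` then gives the summable majorant `e^(1/m) / (m k^(3/2))`.
-/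

open Real Nat

noncomputable def gTerm (m x : ℝ) (k : ℕ) : ℝ :=
  ((k : ℝ) * m + 1) ^ (k - 1) * x ^ k / (m ^ k * (k ! : ℝ))

lemma add_pow_le_pow_mul_exp_s12 {a c : ℝ} (ha : 0 < a) (hc : 0 ≤ c) {n : ℕ} (hn : (n : ℝ) ≤ a) :
    (a + c) ^ n ≤ a ^ n * exp c :=
  calc (a + c) ^ n = a ^ n * (1 + c / a) ^ n := by rw [← mul_pow]; field_simp
    _ ≤ a ^ n * exp (c / a) ^ n := by
        gcongr
        linarith [add_one_le_exp (c / a)]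
    _ = a ^ n * exp (n * (c / a)) := by rw [← exp_nat_mul]
    _ ≤ a ^ n * exp c := by
        gcongr
        rw [mul_div_assoc', div_le_iff₀ ha]
        nlinarith

lemma pow_pred_div_exp_pow_mul_factorial_le {k : ℕ} (hk : k ≠ 0) :
    (k : ℝ) ^ (k - 1) / (exp 1 ^ k * k !) ≤ ((k : ℝ) ^ (3 / 2 : ℝ))⁻¹ := by
  have hk₀ : (0 : ℝ) < k := by positivity
  have h32 : (k : ℝ) ^ (3 / 2 : ℝ) = k * √k := by
    rw [show (3 / 2 : ℝ) = 1 + 1 / 2 by norm_num, rpow_add hk₀, rpow_one, ← sqrt_eq_rpow]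
  rw [div_le_iff₀ (by positivity), h32, inv_mul_eq_div, le_div_iff₀ (by positivity)]
  calc (k : ℝ) ^ (k - 1) * (k * √k) = √k * ((k / exp 1) ^ k * exp 1 ^ k) := by
        rw [div_pow, div_mul_cancel₀ _ (by positivity), ← mul_assoc,
          pow_sub_one_mul hk]
        ring
    _ ≤ √(2 * π * k) * (k / exp 1) ^ k * exp 1 ^ k := by
        rw [← mul_assoc]
        gcongr
        nlinarith [pi_gt_three]
    _ ≤ k ! * exp 1 ^ k := by gcongr; exact Stirling.le_factorial_stirling k
    _ = exp 1 ^ k * k ! := mul_comm _ _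

lemma abs_gTerm_eq {m x : ℝ} (hm : 0 < m) {k : ℕ} (hk : k ≠ 0) :
    |gTerm m x k| = ((k : ℝ) + 1 / m) ^ (k - 1) * |x| ^ k / (m * k !) := by
  rw [gTerm, abs_div, abs_mul, abs_pow x, abs_of_pos (by positivity : (0 : ℝ) < m ^ k * k !),
    abs_of_nonneg (by positivity), ← pow_sub_one_mul hk m,
    show (k : ℝ) + 1 / m = (k * m + 1) / m by field_simp, div_pow]
  field_simp

lemma abs_gTerm_le {m x : ℝ} (hm : 0 < m) (hx : |x| ≤ 1 / exp 1) {k : ℕ} (hk : k ≠ 0) :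
    |gTerm m x k| ≤ exp (1 / m) / m * ((k : ℝ) ^ (3 / 2 : ℝ))⁻¹ := by
  have hbase : ((k : ℝ) + 1 / m) ^ (k - 1) ≤ k ^ (k - 1) * exp (1 / m) :=
    add_pow_le_pow_mul_exp_s12 (by positivity) (by positivity) (by exact_mod_cast k.sub_le 1)
  have hxk : |x| ^ k ≤ (exp 1 ^ k)⁻¹ := by
    rw [← inv_pow, ← one_div]; gcongr
  calc |gTerm m x k| = ((k : ℝ) + 1 / m) ^ (k - 1) * |x| ^ k / (m * k !) := abs_gTerm_eq hm hk
    _ ≤ k ^ (k - 1) * exp (1 / m) * (exp 1 ^ k)⁻¹ / (m * k !) := by gcongr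
    _ = exp (1 / m) / m * ((k : ℝ) ^ (k - 1) / (exp 1 ^ k * k !)) := by field_simp
    _ ≤ exp (1 / m) / m * ((k : ℝ) ^ (3 / 2 : ℝ))⁻¹ := by
        gcongr; exact pow_pred_div_exp_pow_mul_factorial_le hk

theorem g_abs_summable (m : ℝ) (hm : 0 < m) (x : ℝ) (hx : |x| ≤ 1 / Real.exp 1) :
    Summable (fun k : ℕ =>
        ((k : ℝ) * m + 1) ^ (k - 1) * x ^ k / (m ^ k * (Nat.factorial k : ℝ))) ∧
      Summable (fun k : ℕ =>
        |((k : ℝ) * m + 1) ^ (k - 1) * x ^ k / (m ^ k * (Nat.factorial k : ℝ))|) := by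
  have hbound : ∀ᶠ k in Filter.atTop,
      ‖|gTerm m x k|‖ ≤ exp (1 / m) / m * ((k : ℝ) ^ (3 / 2 : ℝ))⁻¹ :=
    Filter.eventually_atTop.2 ⟨1, fun k hk => by
      rw [norm_eq_abs, abs_abs]; exact abs_gTerm_le hm hx (by omega)⟩
  have habs : Summable fun k => |gTerm m x k| :=
    Summable.of_norm_bounded_eventually_nat
      ((summable_nat_rpow_inv.2 (by norm_num)).mul_left _) hbound
  exact ⟨habs.of_abs, habs⟩
end

section
/- For every real number c > 1, there exists exactly one real number z with 0 < z < 1 satisfying z = e^{-c(1-z)}. -/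
/-!
The map `g z = log z + c (1 - z)` is strictly concave on `(0, ∞)`, and the fixed points of
`z ↦ exp (-c (1 - z))` are exactly its zeros. Since `g 1 = 0` and a strictly concave function
cannot take the same value at three points, there is at most one fixed point below `1`. One exists
by the intermediate value theorem: `exp (-c (1 - z)) - z` is positive at `0` and, because
`exp (c - 1) > c`, negative at `1 / c`.
-/

open Real Set

theorem StrictConcaveOn.eq_of_apply_eq_of_lt {𝕜 β : Type*} [Field 𝕜] [LinearOrder 𝕜]
    [IsStrictOrderedRing 𝕜] [AddCommMonoid β] [LinearOrder β] [IsOrderedAddMonoid β] [Module 𝕜 β]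
    [PosSMulStrictMono 𝕜 β] {s : Set 𝕜} {f : 𝕜 → β} (hf : StrictConcaveOn 𝕜 s f) {x y b : 𝕜}
    (hx : x ∈ s) (hy : y ∈ s) (hb : b ∈ s) (hxb : x < b) (hyb : y < b)
    (hfx : f x = f b) (hfy : f y = f b) : x = y := by
  wlog hxy : x < y generalizing x y
  · rcases (not_lt.1 hxy).lt_or_eq with hyx | hyx
    · exact (this hy hx hyb hxb hfy hfx hyx).symm
    · exact hyx.symm
  have := hf.lt_on_openSegment hx hb hxb.ne (Ioo_subset_openSegment ⟨hxy, hyb⟩)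
  rw [hfx, hfy, min_self] at this
  exact absurd this (lt_irrefl _)

theorem strictConcaveOn_log_add_mul_one_sub (c : ℝ) :
    StrictConcaveOn ℝ (Ioi 0) (fun z ↦ log z + c * (1 - z)) :=
  strictConcaveOn_log_Ioi.add_concaveOn <|
    (((LinearMap.mul ℝ ℝ (-c)).concaveOn (convex_Ioi 0)).add_const c).congr fun z _ ↦ by
      simp only [map_neg, LinearMap.coe_neg, Pi.add_apply, Pi.neg_apply,
        LinearMap.mul_apply_apply]
      ring

theorem exists_exp_neg_mul_one_sub_eq_mem_Ioo {c : ℝ} (hc : 1 < c) :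
    ∃ z ∈ Ioo 0 c⁻¹, exp (-c * (1 - z)) = z := by
  have hc0 : 0 < c := zero_lt_one.trans hc
  have hcont : ContinuousOn (fun z ↦ exp (-c * (1 - z)) - z) (Icc 0 c⁻¹) := by fun_prop
  have h_end : exp (-c * (1 - c⁻¹)) - c⁻¹ < 0 := by
    have hexp : c < exp (c - 1) := by linarith [add_one_lt_exp (sub_pos.2 hc).ne']
    have hval : exp (-c * (1 - c⁻¹)) = (exp (c - 1))⁻¹ := by
      rw [← exp_neg]
      field_simp
    rw [hval, sub_neg]
    exact inv_strictAnti₀ hc0 hexp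
  have h_start : 0 < exp (-c * (1 - 0)) - 0 := by simpa using exp_pos (-c)
  obtain ⟨z, hz, hz0⟩ := intermediate_value_Ioo' (inv_pos.2 hc0).le hcont ⟨h_end, h_start⟩
  exact ⟨z, hz, sub_eq_zero.1 hz0⟩

theorem existsUnique_fixed_point (c : ℝ) (hc : 1 < c) :
    ∃! z : ℝ, 0 < z ∧ z < 1 ∧ z = Real.exp (-c * (1 - z)) := by
  obtain ⟨z, ⟨hz0, hzc⟩, hz⟩ := exists_exp_neg_mul_one_sub_eq_mem_Ioo hc
  have hz1 : z < 1 := hzc.trans (inv_lt_one_of_one_lt₀ hc)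
  refine ⟨z, ⟨hz0, hz1, hz.symm⟩, ?_⟩
  have hroot {y : ℝ} (hy : y = exp (-c * (1 - y))) :
      log y + c * (1 - y) = log 1 + c * (1 - 1) := by
    rw [hy, log_exp, ← hy]
    simp
  rintro y ⟨hy0, hy1, hy⟩
  exact (strictConcaveOn_log_add_mul_one_sub c).eq_of_apply_eq_of_lt hy0 hz0
    (mem_Ioi.2 one_pos) hy1 hz1 (hroot hy) (hroot hz.symm)
end

section
/- For every positive real number m, the power series ∑_{k=0}^∞ (km+1)^{k-1} x^k/(m^k k!) has radius of convergence exactly 1/e: it converges absolutely for every real x with |x| < 1/e and diverges for every real x with |x| > 1/e. -/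
/-!
The terms `a k` of the series satisfy
`a (k + 1) = x * (1 + m / (k * m + 1)) ^ k * (k * m + 1) / (m * (k + 1)) * a k`.
Since `k * m / (k * m + 1) → 1`, the power tends to `e` while the last factor tends to `1`, so
`|a (k + 1)| / |a k| → |x| e` and the ratio test decides both halves.
-/

open Filter Real Topology
open scoped Nat

noncomputable def seriesTerm (m x : ℝ) (k : ℕ) : ℝ :=
  ((k : ℝ) * m + 1) ^ (k - 1) * x ^ k / (m ^ k * (k ! : ℝ))

noncomputable def termRatio (m : ℝ) (k : ℕ) : ℝ :=
  (1 + m / (k * m + 1)) ^ k * ((k * m + 1) / (m * (k + 1)))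

section

variable {m : ℝ}

lemma seriesTerm_ne_zero (hm : 0 < m) {x : ℝ} (hx : x ≠ 0) (k : ℕ) :
    seriesTerm m x k ≠ 0 := by
  unfold seriesTerm; positivity

lemma termRatio_pos (hm : 0 < m) (k : ℕ) : 0 < termRatio m k := by
  unfold termRatio; positivity

lemma seriesTerm_succ (hm : 0 < m) (x : ℝ) (k : ℕ) :
    seriesTerm m x (k + 1) = x * termRatio m k * seriesTerm m x k := by
  rcases k with _ | n
  · simp [seriesTerm, termRatio, div_eq_mul_inv]
  · have hD : (0 : ℝ) < (n + 1 : ℕ) * m + 1 := by positivity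
    have hsum : 1 + m / ((n + 1 : ℕ) * m + 1) =
        ((n + 1 + 1 : ℕ) * m + 1) / ((n + 1 : ℕ) * m + 1) := by
      field_simp
      push_cast
      ring
    simp only [seriesTerm, termRatio, hsum, div_pow, Nat.factorial_succ, Nat.add_sub_cancel]
    rw [pow_succ _ n]
    field_simp
    push_cast
    ring

lemma tendsto_termRatio (hm : 0 < m) : Tendsto (termRatio m) atTop (𝓝 (exp 1)) := by
  have hD : Tendsto (fun k : ℕ => (k : ℝ) * m + 1) atTop atTop :=
    tendsto_atTop_add_const_right _ _ (tendsto_natCast_atTop_atTop.atTop_mul_const hm)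
  have hpow : Tendsto (fun k : ℕ => (1 + m / (k * m + 1)) ^ k) atTop (𝓝 (exp 1)) := by
    apply tendsto_one_add_pow_exp_of_tendsto
    have : Tendsto (fun k : ℕ => 1 - 1 / ((k : ℝ) * m + 1)) atTop (𝓝 (1 - 0)) :=
      tendsto_const_nhds.sub (tendsto_const_nhds.div_atTop hD)
    refine (sub_zero (1 : ℝ) ▸ this).congr fun k => ?_
    have : (0 : ℝ) < k * m + 1 := by positivity
    field_simp
    ring
  have hfrac : Tendsto (fun k : ℕ => ((k : ℝ) * m + 1) / (m * (k + 1))) atTop (𝓝 1) := by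
    have : Tendsto (fun k : ℕ => 1 + (1 - m) / (m * (k + 1))) atTop (𝓝 (1 + 0)) := by
      refine tendsto_const_nhds.add (tendsto_const_nhds.div_atTop ?_)
      exact (tendsto_atTop_add_const_right _ _ tendsto_natCast_atTop_atTop).const_mul_atTop hm
    refine (add_zero (1 : ℝ) ▸ this).congr fun k => ?_
    field_simp
    ring
  rw [← mul_one (exp 1)]
  exact hpow.mul hfrac

lemma tendsto_norm_seriesTerm_ratio (hm : 0 < m) {x : ℝ} (hx : x ≠ 0) :
    Tendsto (fun k => ‖seriesTerm m x (k + 1)‖ / ‖seriesTerm m x k‖) atTop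
      (𝓝 (|x| * exp 1)) := by
  refine (tendsto_termRatio hm).const_mul |x| |>.congr fun k => ?_
  rw [seriesTerm_succ hm, norm_mul, norm_mul, mul_div_assoc,
    div_self (norm_ne_zero_iff.mpr (seriesTerm_ne_zero hm hx k)), mul_one,
    norm_of_nonneg (termRatio_pos hm k).le, Real.norm_eq_abs]

end

theorem radius_of_convergence (m : ℝ) (hm : 0 < m) :
    (∀ x : ℝ, |x| < 1 / Real.exp 1 →
      Summable (fun k : ℕ =>
        |((k : ℝ) * m + 1) ^ (k - 1) * x ^ k / (m ^ k * (Nat.factorial k : ℝ))|)) ∧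
    (∀ x : ℝ, 1 / Real.exp 1 < |x| →
      ¬ Summable (fun k : ℕ =>
        ((k : ℝ) * m + 1) ^ (k - 1) * x ^ k / (m ^ k * (Nat.factorial k : ℝ)))) := by
  refine ⟨fun x hx => ?_, fun x hx => ?_⟩
  · change Summable fun k => |seriesTerm m x k|
    rcases eq_or_ne x 0 with rfl | hx0
    · refine summable_of_ne_finset_zero (s := {0}) fun k hk => ?_
      simp [seriesTerm, zero_pow (Finset.notMem_singleton.mp hk)]
    · rw [lt_div_iff₀ (exp_pos 1)] at hx
      exact (summable_of_ratio_test_tendsto_lt_one hx (.of_forall (seriesTerm_ne_zero hm hx0))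
        (tendsto_norm_seriesTerm_ratio hm hx0)).abs
  · have hx0 : x ≠ 0 := by rintro rfl; rw [abs_zero] at hx; exact hx.not_gt (by positivity)
    rw [div_lt_iff₀ (exp_pos 1)] at hx
    exact not_summable_of_ratio_test_tendsto_gt_one hx (tendsto_norm_seriesTerm_ratio hm hx0)
end
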